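/- arXiv:1405.4809 — 2 statements merged into one kernel-verified Lean document; each statement's English description precedes it below -/
import Mathlib

section
/- Let f : X → (-∞,+∞] be a c-antiderivative of a multivalued mapping M : X ⇉ Y, and let S be a nonempty subset of dom(M). Then (α_{[c,f|_S,M]})^c = γ_{[c,f^c|_{M(S)},M⁻¹]} and (γ_{[c,f|_S,M]})^c = α_{[c,f^c|_{M(S)},M⁻¹]}, where α and γ denote the pointwise infimum and pointwise supremum, respectively, of the indicated families. -/
/-!
Whenever `y ∈ ∂_c h(x)` one has `h^c(y) = c(x,y) - h(x)` and `x ∈ ∂_c h^c(y)`. So for `h` in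
`𝒜_{[c,f|_S,M]}` the values of `h^c` on `M(S)` are fixed by those of `h` on `S`, and `h ↦ h^c`
maps `𝒜_{[c,f|_S,M]}` into `𝒜_{[c,f^c|_{M(S)},M⁻¹]}`; symmetrically `g ↦ g^c` maps back, and
`g = (g^c)^c` because `g` is `c`-convex. Since the `c`-transform turns infima into suprema,
this gives `α^c = γ_{[c,f^c|_{M(S)},M⁻¹]}`. For the second identity, the family contains
`f^{cc}` and is closed under suprema, so `γ` is its largest element and `γ^c` is the least
element of the dual family.
-/

noncomputable section

open scoped Classical

variable {X Y : Type*}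

/-- The `c`-transform of `f : X → EReal`, a function on `Y`:
`f^c(y) = sup_{x ∈ X} (c(x,y) - f(x))`. The `c`-transform of a function on `Y` is obtained
by applying this to the swapped coupling `fun y x => c x y`. -/
def cTransform (c : X → Y → ℝ) (f : X → EReal) : Y → EReal :=
  fun y => ⨆ x, ((c x y : EReal) - f x)

/-- `f` is proper: it takes no value `-∞` (i.e. maps into `(-∞, +∞]`) and is finite somewhere. -/
def ProperFn (f : X → EReal) : Prop :=
  (∀ x, f x ≠ ⊥) ∧ ∃ x, f x ≠ ⊤

/-- `f` is `c`-convex: it is proper and is the `c`-transform of some proper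
`g : Y → (-∞, +∞]`. -/
def IsCConvex (c : X → Y → ℝ) (f : X → EReal) : Prop :=
  ProperFn f ∧ ∃ g : Y → EReal, ProperFn g ∧ f = cTransform (fun y x => c x y) g

/-- The `c`-subdifferential of `f`:
`∂_c f(x) = { y | ∀ x', f(x) + c(x',y) ≤ f(x') + c(x,y) }`. -/
def cSubdiff (c : X → Y → ℝ) (f : X → EReal) (x : X) : Set Y :=
  { y | ∀ x', f x + (c x' y : EReal) ≤ f x' + (c x y : EReal) }

/-- The domain of a multivalued mapping `M : X ⇉ Y`. -/
def mapDom (M : X → Set Y) : Set X := { x | (M x).Nonempty }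

/-- The inverse multivalued mapping `M⁻¹ : Y ⇉ X`. -/
def mapInv (M : X → Set Y) : Y → Set X := fun y => { x | y ∈ M x }

/-- The image `M(S) = ⋃_{s ∈ S} M(s)` of a set `S` under a multivalued mapping. -/
def mapImageOn (M : X → Set Y) (S : Set X) : Set Y := { y | ∃ s ∈ S, y ∈ M s }

/-- The image `Im(M) = ⋃_{x ∈ X} M(x)` of a multivalued mapping. -/
def mapIm (M : X → Set Y) : Set Y := { y | ∃ x, y ∈ M x }

/-- `f` is a `c`-antiderivative of `M`: `f` is proper and `G(M) ⊆ G(∂_c f)`. -/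
def IsCAntiderivative (c : X → Y → ℝ) (f : X → EReal) (M : X → Set Y) : Prop :=
  ProperFn f ∧ ∀ x y, y ∈ M x → y ∈ cSubdiff c f x

/-- The family `𝒜_{[c, f|_S, M]}` of all `c`-convex `c`-antiderivatives of `M`
which coincide with `f` on `S`. -/
def cFamily (c : X → Y → ℝ) (f : X → EReal) (S : Set X) (M : X → Set Y) :
    Set (X → EReal) :=
  { h | IsCConvex c h ∧ (∀ x y, y ∈ M x → y ∈ cSubdiff c h x) ∧ ∀ s ∈ S, h s = f s }

/-- The upper envelope `γ_{[c, f|_S, M]}`. -/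
def upperEnv (c : X → Y → ℝ) (f : X → EReal) (S : Set X) (M : X → Set Y) : X → EReal :=
  fun x => ⨆ h ∈ cFamily c f S M, h x

/-- The lower envelope `α_{[c, f|_S, M]}`. -/
def lowerEnv (c : X → Y → ℝ) (f : X → EReal) (S : Set X) (M : X → Set Y) : X → EReal :=
  fun x => ⨅ h ∈ cFamily c f S M, h x

/-- The indicator function `ι_A` (0 on `A`, `+∞` off `A`). -/
def indicatorE (A : Set X) : X → EReal := fun x => if x ∈ A then 0 else ⊤

/-- Rockafellar's function `R_{[c,M,s]}`: the supremum over `n ≥ 1` and chains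
`x_1 = s`, `x_{n+1} = x`, `{(x_i, y_i)}_{i=1}^n ⊆ G(M)` of
`Σ_{i=1}^n [c(x_{i+1}, y_i) - c(x_i, y_i)]` (0-indexed below). -/
def rockafellar (c : X → Y → ℝ) (M : X → Set Y) (s : X) : X → EReal := fun x =>
  ⨆ (n : ℕ) (_ : 0 < n) (xs : ℕ → X) (ys : ℕ → Y)
      (_ : xs 0 = s ∧ ∀ i < n, ys i ∈ M (xs i)),
    (((∑ i ∈ Finset.range n,
        (c (if i + 1 < n then xs (i + 1) else x) (ys i) - c (xs i) (ys i))) : ℝ) : EReal)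

/-- `M` is cyclically monotone of order `n` with respect to `c`: for any `n` pairs
`{(x_i, y_i)}_{i=1}^n ⊆ G(M)`, setting `x_{n+1} = x_1`,
`0 ≤ Σ_{i=1}^n [c(x_i,y_i) - c(x_{i+1},y_i)]` (0-indexed below, cyclically). -/
def IsNCMonotone (c : X → Y → ℝ) (M : X → Set Y) (n : ℕ) : Prop :=
  ∀ (xs : ℕ → X) (ys : ℕ → Y), (∀ i < n, ys i ∈ M (xs i)) →
    0 ≤ ∑ i ∈ Finset.range n, (c (xs i) (ys i) - c (xs ((i + 1) % n)) (ys i))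

/-- `M` is `c`-cyclically monotone: `n`-`c`-monotone for all `n`. -/
def IsCCyclicallyMonotone (c : X → Y → ℝ) (M : X → Set Y) : Prop :=
  ∀ n : ℕ, IsNCMonotone c M n

namespace EReal

lemma coe_sub_sub_cancel (r : ℝ) (a : EReal) : (r : EReal) - (r - a) = a := by
  induction a <;> simp [← coe_sub]

lemma coe_sub_le_comm {r : ℝ} {a b : EReal} :
    (r : EReal) - a ≤ b ↔ (r : EReal) - b ≤ a := by
  induction a <;> induction b <;> simp [← coe_sub, add_comm]

lemma coe_sub_le_coe_sub_of_add_le {r r' : ℝ} {a b : EReal} (h : a + r' ≤ b + r) :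
    (r' : EReal) - b ≤ r - a := by
  induction a <;> induction b <;> simp_all [← coe_sub, ← coe_add]
  linarith

lemma coe_sub_add_coe_comm (r r' : ℝ) (a : EReal) : (r : EReal) - a + r' = (r' - a) + r := by
  induction a <;> simp [← coe_sub, ← coe_add]
  ring

lemma coe_sub_iInf {ι : Sort*} (r : ℝ) (g : ι → EReal) :
    (r : EReal) - ⨅ i, g i = ⨆ i, (r : EReal) - g i :=
  GaloisConnection.l_iSup (l := fun b : ERealᵒᵈ => (r : EReal) - OrderDual.ofDual b)
    (u := fun a => OrderDual.toDual ((r : EReal) - a)) fun _ _ => coe_sub_le_comm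

end EReal

section Duality

variable {c : X → Y → ℝ}

section Transform

variable {h : X → EReal} {x : X} {y : Y}

lemma cTransform_antitone : Antitone (cTransform c) :=
  fun _ _ hle _ => iSup_mono fun _ => EReal.sub_le_sub le_rfl (hle _)

lemma cTransform_cTransform_le (h : X → EReal) :
    cTransform (fun y x => c x y) (cTransform c h) ≤ h := fun x =>
  iSup_le fun y =>
    (EReal.sub_le_sub le_rfl (le_iSup (fun x' => (c x' y : EReal) - h x') x)).trans_eq
      (EReal.coe_sub_sub_cancel _ _)

lemma IsCConvex.cTransform_cTransform (hh : IsCConvex c h) :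
    cTransform (fun y x => c x y) (cTransform c h) = h := by
  obtain ⟨-, g, -, rfl⟩ := hh
  exact le_antisymm (cTransform_cTransform_le _)
    (cTransform_antitone (cTransform_cTransform_le (c := fun y x => c x y) g))

lemma cTransform_biInf (F : Set (X → EReal)) (y : Y) :
    cTransform c (fun x => ⨅ h ∈ F, h x) y = ⨆ h ∈ F, cTransform c h y := by
  simp only [cTransform, EReal.coe_sub_iInf]
  exact iSup_comm.trans (iSup_congr fun _ => iSup_comm)

lemma cTransform_eq_sub_of_mem_cSubdiff (hy : y ∈ cSubdiff c h x) :
    cTransform c h y = c x y - h x :=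
  le_antisymm (iSup_le fun x' => EReal.coe_sub_le_coe_sub_of_add_le (hy x'))
    (le_iSup (fun x' => (c x' y : EReal) - h x') x)

lemma mem_cSubdiff_cTransform (hy : y ∈ cSubdiff c h x) :
    x ∈ cSubdiff (fun y x => c x y) (cTransform c h) y := fun y' => by
  rw [cTransform_eq_sub_of_mem_cSubdiff hy, EReal.coe_sub_add_coe_comm]
  gcongr
  exact le_iSup (fun x' => (c x' y' : EReal) - h x') x

lemma cTransform_cTransform_of_mem_cSubdiff (hy : y ∈ cSubdiff c h x) :
    cTransform (fun y x => c x y) (cTransform c h) x = h x := by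
  rw [cTransform_eq_sub_of_mem_cSubdiff (mem_cSubdiff_cTransform hy),
    cTransform_eq_sub_of_mem_cSubdiff hy, EReal.coe_sub_sub_cancel]

lemma ProperFn.ne_top_of_mem_cSubdiff (hh : ProperFn h) (hy : y ∈ cSubdiff c h x) :
    h x ≠ ⊤ := by
  obtain ⟨x', hx'⟩ := hh.2
  have hle := hy x'
  lift h x' to ℝ using ⟨hx', hh.1 x'⟩ with t
  intro htop
  rw [htop, EReal.top_add_coe, ← EReal.coe_add] at hle
  exact (EReal.coe_lt_top _).not_ge hle

lemma ProperFn.cTransform (hh : ProperFn h) (hy : y ∈ cSubdiff c h x) :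
    ProperFn (cTransform c h) := by
  refine ⟨fun y' => ?_, y, ?_⟩
  · obtain ⟨x', hx'⟩ := hh.2
    lift h x' to ℝ using ⟨hx', hh.1 x'⟩ with t ht
    refine ne_bot_of_le_ne_bot ?_ (le_iSup (fun x' => (c x' y' : EReal) - h x') x')
    rw [← ht, ← EReal.coe_sub]
    exact EReal.coe_ne_bot _
  · lift h x to ℝ using ⟨hh.ne_top_of_mem_cSubdiff hy, hh.1 x⟩ with t ht
    rw [cTransform_eq_sub_of_mem_cSubdiff hy, ← ht, ← EReal.coe_sub]
    exact EReal.coe_ne_top _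

lemma IsCAntiderivative.cTransform {f : X → EReal} {M : X → Set Y}
    (hf : IsCAntiderivative c f M) (hM : (mapDom M).Nonempty) :
    IsCAntiderivative (fun y x => c x y) (cTransform c f) (mapInv M) :=
  let ⟨x, y, hy⟩ := hM
  ⟨hf.1.cTransform (hf.2 x y hy), fun _ _ hxy => mem_cSubdiff_cTransform (hf.2 _ _ hxy)⟩

end Transform

section Family

variable {f : X → EReal} {M : X → Set Y} {S : Set X}

lemma le_upperEnv {h : X → EReal} (hh : h ∈ cFamily c f S M) : h ≤ upperEnv c f S M :=
  fun x => le_iSup₂ (f := fun h (_ : h ∈ cFamily c f S M) => h x) h hh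

lemma cFamily_subset_of_eqOn {g : X → EReal} {T : Set X} (hST : S ⊆ T)
    (hfg : Set.EqOn f g S) :
    cFamily c f T M ⊆ cFamily c g S M :=
  fun _ ⟨hconv, hM, hT⟩ => ⟨hconv, hM, fun s hs => (hT s (hST hs)).trans (hfg hs)⟩

lemma cTransform_mem_cFamily (hfM : ∀ x y, y ∈ M x → y ∈ cSubdiff c f x)
    (hM : (mapDom M).Nonempty) {h : X → EReal} (hh : h ∈ cFamily c f S M) :
    cTransform c h ∈ cFamily (fun y x => c x y) (cTransform c f) (mapImageOn M S) (mapInv M) := by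
  obtain ⟨hconv, hhM, hhS⟩ := hh
  have hdual := IsCAntiderivative.cTransform ⟨hconv.1, hhM⟩ hM
  refine ⟨⟨hdual.1, h, hconv.1, rfl⟩, hdual.2, ?_⟩
  rintro y ⟨s, hs, hy⟩
  rw [cTransform_eq_sub_of_mem_cSubdiff (hhM s y hy),
    cTransform_eq_sub_of_mem_cSubdiff (hfM s y hy), hhS s hs]

lemma cTransform_mem_cFamily_of_mem_dual (hfM : ∀ x y, y ∈ M x → y ∈ cSubdiff c f x)
    (hSdom : S ⊆ mapDom M) (hM : (mapDom M).Nonempty) {g : Y → EReal}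
    (hg : g ∈ cFamily (fun y x => c x y) (cTransform c f) (mapImageOn M S) (mapInv M)) :
    cTransform (fun y x => c x y) g ∈ cFamily c f S M := by
  have hM' : (mapDom (mapInv M)).Nonempty := let ⟨x, y, hy⟩ := hM; ⟨y, x, hy⟩
  have hmem :=
    cTransform_mem_cFamily (fun y x hxy => mem_cSubdiff_cTransform (hfM x y hxy)) hM' hg
  refine cFamily_subset_of_eqOn (fun s hs => ?_) (fun s hs => ?_) hmem <;>
    obtain ⟨y, hy⟩ := hSdom hs
  · exact ⟨y, ⟨s, hs, hy⟩, hy⟩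
  · exact cTransform_cTransform_of_mem_cSubdiff (hfM s y hy)

lemma cTransform_cTransform_mem_cFamily (hf : IsCAntiderivative c f M) (hSdom : S ⊆ mapDom M)
    (hM : (mapDom M).Nonempty) :
    cTransform (fun y x => c x y) (cTransform c f) ∈ cFamily c f S M := by
  have hfc := hf.cTransform hM
  have hfcc := hfc.cTransform (let ⟨x, y, hy⟩ := hM; ⟨y, x, hy⟩)
  refine ⟨⟨hfcc.1, _, hfc.1, rfl⟩, hfcc.2, fun s hs => ?_⟩
  obtain ⟨y, hy⟩ := hSdom hs
  exact cTransform_cTransform_of_mem_cSubdiff (hf.2 s y hy)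

lemma mem_cSubdiff_upperEnv {x : X} {y : Y} (hy : y ∈ M x) :
    y ∈ cSubdiff c (upperEnv c f S M) x := fun x' => by
  rw [← EReal.le_sub_iff_add_le (by simp) (by simp)]
  refine iSup₂_le fun h hh => ?_
  rw [EReal.le_sub_iff_add_le (by simp) (by simp)]
  exact (hh.2.1 x y hy x').trans (by gcongr; exact le_upperEnv hh x')

lemma upperEnv_eq_of_mem {h₀ : X → EReal} (h₀mem : h₀ ∈ cFamily c f S M) {s : X}
    (hs : s ∈ S) :
    upperEnv c f S M s = f s :=
  le_antisymm (iSup₂_le fun _ hh => (hh.2.2 s hs).le)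
    ((h₀mem.2.2 s hs).symm.le.trans (le_upperEnv h₀mem s))

lemma isCAntiderivative_upperEnv (hSdom : S ⊆ mapDom M) (hS : S.Nonempty) {h₀ : X → EReal}
    (h₀mem : h₀ ∈ cFamily c f S M) : IsCAntiderivative c (upperEnv c f S M) M := by
  obtain ⟨s, hs⟩ := hS
  obtain ⟨y, hy⟩ := hSdom hs
  refine ⟨⟨fun x hx => h₀mem.1.1.1 x (le_bot_iff.1 (hx ▸ le_upperEnv h₀mem x)), s, ?_⟩,
    fun x y hy => mem_cSubdiff_upperEnv hy⟩
  rw [upperEnv_eq_of_mem h₀mem hs, ← h₀mem.2.2 s hs]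
  exact h₀mem.1.1.ne_top_of_mem_cSubdiff (h₀mem.2.1 s y hy)

lemma upperEnv_mem_cFamily (hSdom : S ⊆ mapDom M) (hS : S.Nonempty) {h₀ : X → EReal}
    (h₀mem : h₀ ∈ cFamily c f S M) : upperEnv c f S M ∈ cFamily c f S M := by
  have hγ := isCAntiderivative_upperEnv hSdom hS h₀mem
  have hle :
      upperEnv c f S M ≤ cTransform (fun y x => c x y) (cTransform c (upperEnv c f S M)) :=
    fun x => iSup₂_le fun h hh => calc
      h x = cTransform (fun y x => c x y) (cTransform c h) x :=
        (congrFun hh.1.cTransform_cTransform x).symm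
      _ ≤ _ := cTransform_antitone (cTransform_antitone (le_upperEnv hh)) x
  exact ⟨⟨hγ.1, _, (hγ.cTransform (hS.mono hSdom)).1,
    le_antisymm hle (cTransform_cTransform_le _)⟩, hγ.2, fun _ hs => upperEnv_eq_of_mem h₀mem hs⟩

theorem cTransform_lowerEnv (hfM : ∀ x y, y ∈ M x → y ∈ cSubdiff c f x) (hSdom : S ⊆ mapDom M)
    (hM : (mapDom M).Nonempty) :
    cTransform c (lowerEnv c f S M) =
      upperEnv (fun y x => c x y) (cTransform c f) (mapImageOn M S) (mapInv M) := by
  funext y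
  refine (cTransform_biInf (cFamily c f S M) y).trans (le_antisymm ?_ ?_)
  · exact iSup₂_le fun h hh => le_upperEnv (cTransform_mem_cFamily hfM hM hh) y
  · refine iSup₂_le fun g hg => ?_
    calc g y = cTransform c (cTransform (fun y x => c x y) g) y :=
          (congrFun hg.1.cTransform_cTransform y).symm
      _ ≤ _ := le_iSup₂ (f := fun h (_ : h ∈ cFamily c f S M) => cTransform c h y) _
          (cTransform_mem_cFamily_of_mem_dual hfM hSdom hM hg)

theorem cTransform_upperEnv (hf : IsCAntiderivative c f M) (hSdom : S ⊆ mapDom M)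
    (hS : S.Nonempty) :
    cTransform c (upperEnv c f S M) =
      lowerEnv (fun y x => c x y) (cTransform c f) (mapImageOn M S) (mapInv M) := by
  have hM := hS.mono hSdom
  funext y
  refine le_antisymm (le_iInf₂ fun g hg => ?_) (iInf₂_le _ (cTransform_mem_cFamily hf.2 hM
    (upperEnv_mem_cFamily hSdom hS (cTransform_cTransform_mem_cFamily hf hSdom hM))))
  calc cTransform c (upperEnv c f S M) y
      ≤ cTransform c (cTransform (fun y x => c x y) g) y :=
        cTransform_antitone (le_upperEnv (cTransform_mem_cFamily_of_mem_dual hf.2 hSdom hM hg)) y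
    _ = g y := congrFun hg.1.cTransform_cTransform y

end Family

end Duality

theorem statement5_general (c : X → Y → ℝ) (f : X → EReal)
    (M : X → Set Y) (hf : IsCAntiderivative c f M)
    (S : Set X) (hS : S.Nonempty) (hSdom : S ⊆ mapDom M) :
    cTransform c (lowerEnv c f S M) =
        upperEnv (fun y x => c x y) (cTransform c f) (mapImageOn M S) (mapInv M) ∧
      cTransform c (upperEnv c f S M) =
        lowerEnv (fun y x => c x y) (cTransform c f) (mapImageOn M S) (mapInv M) :=
  ⟨cTransform_lowerEnv hf.2 hSdom (hS.mono hSdom), cTransform_upperEnv hf hSdom hS⟩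

/-- `(α_{[c,f|_S,M]})^c = γ_{[c, f^c|_{M(S)}, M⁻¹]}` and
`(γ_{[c,f|_S,M]})^c = α_{[c, f^c|_{M(S)}, M⁻¹]}`. -/
theorem statement5 [Nonempty X] [Nonempty Y] (c : X → Y → ℝ) (f : X → EReal)
    (M : X → Set Y) (hf : IsCAntiderivative c f M)
    (S : Set X) (hS : S.Nonempty) (hSdom : S ⊆ mapDom M) :
    cTransform c (lowerEnv c f S M) =
        upperEnv (fun y x => c x y) (cTransform c f) (mapImageOn M S) (mapInv M) ∧
      cTransform c (upperEnv c f S M) =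
        lowerEnv (fun y x => c x y) (cTransform c f) (mapImageOn M S) (mapInv M) :=
  statement5_general c f M hf S hS hSdom
end
end

section
/- Let f : X → (-∞,+∞] be a c-antiderivative of a multivalued mapping M : X ⇉ Y and take S = dom(M). Then the pointwise infimum of the family 𝒜_{[c,f|_{dom(M)},M]} satisfies, for every x ∈ X, α_{[c,f|_{dom(M)},M]}(x) = (f^c + ι_{Im(M)})^c(x) = sup_{(s,t) ∈ G(M)} [ f(s) + c(x,t) − c(s,t) ], where ι_{Im(M)} is the indicator function of the image Im(M) = ∪_{x∈X} M(x). -/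
/-!
The infimum is attained by `H = cSupportEnvelope c f M`,
`H x = sup_{(s,t) ∈ G(M)} [f(s) + c(x,t) - c(s,t)]`. Every member `h` of the family equals `f`
on `dom M` and has `G(M) ⊆ G(∂_c h)`, so each `c`-affine function `x ↦ f(s) + c(x,t) - c(s,t)`
with `t ∈ M s` lies below `h`, whence `H ≤ h`. Conversely `H` belongs to the family: on the graph
the `c`-transform is pinned down, `f^c(t) = c(s,t) - f(s)` for `t ∈ ∂_c f(s)`, which identifies
`H` with `(f^c + ι_{Im M})^c`, and `H = f` on `dom M` because `f` itself is a `c`-antiderivative.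
-/

noncomputable section

open scoped Classical

variable {X Y : Type*}

theorem EReal.add_coe_le_add_coe_iff (w z : EReal) (a b : ℝ) :
    w + a ≤ z + b ↔ w + ((a - b : ℝ) : EReal) ≤ z := by
  induction w using EReal.rec <;> induction z using EReal.rec <;>
    simp only [EReal.top_add_coe, EReal.bot_add, ← EReal.coe_add, EReal.coe_le_coe_iff] <;>
    first | (constructor <;> intro <;> linarith) | simp [-EReal.coe_add]

theorem EReal.coe_sub_add_coe_sub (a b : ℝ) (w : EReal) :
    (a : EReal) - (w + ((a - b : ℝ) : EReal)) = b - w := by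
  induction w using EReal.rec <;>
    simp only [EReal.top_add_coe, EReal.bot_add, ← EReal.coe_add, ← EReal.coe_sub] <;>
    first | (congr 1; ring) | simp

theorem EReal.coe_sub_coe_sub (a b : ℝ) (w : EReal) :
    (a : EReal) - ((b : EReal) - w) = w + ((a - b : ℝ) : EReal) := by
  induction w using EReal.rec <;>
    simp only [EReal.top_add_coe, EReal.bot_add, ← EReal.coe_add, ← EReal.coe_sub] <;>
    first | (congr 1; ring) | simp

section CTransform

variable {c : X → Y → ℝ} {f : X → EReal}

theorem mem_cSubdiff_iff {x : X} {y : Y} :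
    y ∈ cSubdiff c f x ↔ ∀ x', f x + ((c x' y - c x y : ℝ) : EReal) ≤ f x' :=
  forall_congr' fun _ => EReal.add_coe_le_add_coe_iff _ _ _ _

theorem eq_top_of_mem_cSubdiff {x : X} {y : Y} (hy : y ∈ cSubdiff c f x) (hx : f x = ⊤)
    (x' : X) : f x' = ⊤ := by
  have h := mem_cSubdiff_iff.1 hy x'
  rwa [hx, EReal.top_add_coe, top_le_iff] at h

theorem cTransform_eq_of_mem_cSubdiff {x : X} {y : Y} (hy : y ∈ cSubdiff c f x) :
    cTransform c f y = (c x y : EReal) - f x := by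
  refine le_antisymm (iSup_le fun x' => ?_) (le_iSup (fun x' => (c x' y : EReal) - f x') x)
  calc (c x' y : EReal) - f x'
      ≤ (c x' y : EReal) - (f x + ((c x' y - c x y : ℝ) : EReal)) :=
        EReal.sub_le_sub le_rfl (mem_cSubdiff_iff.1 hy x')
    _ = (c x y : EReal) - f x := EReal.coe_sub_add_coe_sub _ _ _

theorem cTransform_ne_bot (hf : ProperFn f) (y : Y) : cTransform c f y ≠ ⊥ := by
  obtain ⟨x, hx⟩ := hf.2
  refine ne_bot_of_le_ne_bot ?_ (le_iSup (fun x' => (c x' y : EReal) - f x') x)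
  lift f x to ℝ using ⟨hx, hf.1 x⟩ with r
  exact EReal.coe_ne_bot _

end CTransform

theorem IsCAntiderivative.ne_top {c : X → Y → ℝ} {f : X → EReal} {M : X → Set Y}
    (hf : IsCAntiderivative c f M) {s : X} (hs : s ∈ mapDom M) : f s ≠ ⊤ := by
  obtain ⟨t, ht⟩ := hs
  obtain ⟨x, hx⟩ := hf.1.2
  exact fun hs => hx (eq_top_of_mem_cSubdiff (hf.2 s t ht) hs x)

section DualPotential

variable {c : X → Y → ℝ} {f : X → EReal} {M : X → Set Y}

theorem cTransform_add_indicatorE_of_mem (hf : IsCAntiderivative c f M) {s : X} {t : Y}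
    (ht : t ∈ M s) :
    cTransform c f t + indicatorE (mapIm M) t = (c s t : EReal) - f s := by
  rw [indicatorE, if_pos ⟨s, ht⟩, add_zero, cTransform_eq_of_mem_cSubdiff (hf.2 s t ht)]

theorem cTransform_add_indicatorE_of_notMem (hf : ProperFn f) {t : Y} (ht : t ∉ mapIm M) :
    cTransform c f t + indicatorE (mapIm M) t = ⊤ := by
  rw [indicatorE, if_neg ht, EReal.add_top_of_ne_bot (cTransform_ne_bot hf t)]

end DualPotential

def cSupportEnvelope (c : X → Y → ℝ) (f : X → EReal) (M : X → Set Y) : X → EReal :=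
  fun x => ⨆ (p : X × Y) (_ : p.2 ∈ M p.1), (f p.1 + ((c x p.2 - c p.1 p.2 : ℝ) : EReal))

section CSupportEnvelope

variable {c : X → Y → ℝ} {f h : X → EReal} {M : X → Set Y}

theorem le_cSupportEnvelope {s : X} {t : Y} (ht : t ∈ M s) (x : X) :
    f s + ((c x t - c s t : ℝ) : EReal) ≤ cSupportEnvelope c f M x :=
  le_iSup₂ (f := fun (p : X × Y) (_ : p.2 ∈ M p.1) =>
    f p.1 + ((c x p.2 - c p.1 p.2 : ℝ) : EReal)) (s, t) ht

theorem cSupportEnvelope_congr (hfh : ∀ s ∈ mapDom M, h s = f s) :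
    cSupportEnvelope c h M = cSupportEnvelope c f M := by
  funext x
  refine iSup_congr fun p => iSup_congr fun hp => ?_
  rw [hfh p.1 ⟨p.2, hp⟩]

theorem cSupportEnvelope_le (hh : ∀ x y, y ∈ M x → y ∈ cSubdiff c h x) :
    cSupportEnvelope c h M ≤ h :=
  fun x => iSup₂_le fun p hp => mem_cSubdiff_iff.1 (hh p.1 p.2 hp) x

theorem cSupportEnvelope_eq_of_mem_mapDom (hf : IsCAntiderivative c f M) {s : X}
    (hs : s ∈ mapDom M) : cSupportEnvelope c f M s = f s := by
  obtain ⟨t, ht⟩ := hs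
  refine le_antisymm (cSupportEnvelope_le hf.2 s) ?_
  simpa using le_cSupportEnvelope (c := c) (f := f) ht s

theorem cSupportEnvelope_eq_cTransform (hf : IsCAntiderivative c f M) :
    cSupportEnvelope c f M =
      cTransform (fun y x => c x y) (fun y => cTransform c f y + indicatorE (mapIm M) y) := by
  funext x
  apply le_antisymm
  · refine iSup₂_le fun p hp => ?_
    rw [← EReal.coe_sub_coe_sub, ← cTransform_add_indicatorE_of_mem hf hp]
    exact le_iSup (fun y => (c x y : EReal) - (cTransform c f y + indicatorE (mapIm M) y)) p.2
  · refine iSup_le fun y => ?_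
    dsimp only
    by_cases hy : y ∈ mapIm M
    · obtain ⟨s, hs⟩ := hy
      rw [cTransform_add_indicatorE_of_mem hf hs, EReal.coe_sub_coe_sub]
      exact le_cSupportEnvelope hs x
    · simp [cTransform_add_indicatorE_of_notMem hf.1 hy]

theorem cSupportEnvelope_mem_cFamily (hf : IsCAntiderivative c f M) (hdom : (mapDom M).Nonempty) :
    cSupportEnvelope c f M ∈ cFamily c f (mapDom M) M := by
  obtain ⟨s₀, t₀, ht₀⟩ := hdom
  have hagree : ∀ s ∈ mapDom M, cSupportEnvelope c f M s = f s :=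
    fun s hs => cSupportEnvelope_eq_of_mem_mapDom hf hs
  have hproper : ProperFn (cSupportEnvelope c f M) := by
    refine ⟨fun x => ne_bot_of_le_ne_bot ?_ (le_cSupportEnvelope ht₀ x), s₀, ?_⟩
    · exact EReal.add_ne_bot_iff.2 ⟨hf.1.1 s₀, EReal.coe_ne_bot _⟩
    · rw [hagree s₀ ⟨t₀, ht₀⟩]
      exact hf.ne_top ⟨t₀, ht₀⟩
  have hdual : ProperFn fun y => cTransform c f y + indicatorE (mapIm M) y := by
    refine ⟨fun y => EReal.add_ne_bot_iff.2 ⟨cTransform_ne_bot hf.1 y, ?_⟩, t₀, ?_⟩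
    · unfold indicatorE
      split_ifs <;> simp
    · dsimp only
      rw [cTransform_add_indicatorE_of_mem hf ht₀]
      lift f s₀ to ℝ using ⟨hf.ne_top ⟨t₀, ht₀⟩, hf.1.1 s₀⟩ with r
      exact EReal.coe_ne_top (c s₀ t₀ - r)
  refine ⟨⟨hproper, _, hdual, cSupportEnvelope_eq_cTransform hf⟩, fun s t ht => ?_, hagree⟩
  exact mem_cSubdiff_iff.2 fun x => hagree s ⟨t, ht⟩ ▸ le_cSupportEnvelope ht x

theorem cSupportEnvelope_le_of_mem_cFamily (hh : h ∈ cFamily c f (mapDom M) M) :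
    cSupportEnvelope c f M ≤ h :=
  cSupportEnvelope_congr hh.2.2 ▸ cSupportEnvelope_le hh.2.1

theorem lowerEnv_eq_cSupportEnvelope (hf : IsCAntiderivative c f M)
    (hdom : (mapDom M).Nonempty) :
    lowerEnv c f (mapDom M) M = cSupportEnvelope c f M :=
  funext fun x => le_antisymm (iInf₂_le _ (cSupportEnvelope_mem_cFamily hf hdom))
    (le_iInf₂ fun _ hh => cSupportEnvelope_le_of_mem_cFamily hh x)

end CSupportEnvelope

theorem statement7_general (c : X → Y → ℝ) (f : X → EReal)
    (M : X → Set Y) (hf : IsCAntiderivative c f M)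
    (hdom : (mapDom M).Nonempty) :
    ∀ x : X,
      lowerEnv c f (mapDom M) M x =
          cTransform (fun y x => c x y)
            (fun y => cTransform c f y + indicatorE (mapIm M) y) x ∧
        lowerEnv c f (mapDom M) M x =
          ⨆ (p : X × Y) (_ : p.2 ∈ M p.1),
            (f p.1 + ((c x p.2 - c p.1 p.2 : ℝ) : EReal)) := by
  intro x
  rw [lowerEnv_eq_cSupportEnvelope hf hdom, ← cSupportEnvelope_eq_cTransform hf]
  exact ⟨rfl, rfl⟩

/-- In the case `S = dom M`, the lower envelope satisfies, for every `x`,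
`α_{[c, f|_{dom M}, M]}(x) = (f^c + ι_{Im M})^c(x) = sup_{(s,t) ∈ G(M)} [f(s) + c(x,t) - c(s,t)]`. -/
theorem statement7 [Nonempty X] [Nonempty Y] (c : X → Y → ℝ) (f : X → EReal)
    (M : X → Set Y) (hf : IsCAntiderivative c f M)
    (hdom : (mapDom M).Nonempty) :
    ∀ x : X,
      lowerEnv c f (mapDom M) M x =
          cTransform (fun y x => c x y)
            (fun y => cTransform c f y + indicatorE (mapIm M) y) x ∧
        lowerEnv c f (mapDom M) M x =
          ⨆ (p : X × Y) (_ : p.2 ∈ M p.1),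
            (f p.1 + ((c x p.2 - c p.1 p.2 : ℝ) : EReal)) :=
  statement7_general c f M hf hdom
end
end
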